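/- Let n ≥ 1 and let p ∈ ℕ. Define on ℝ[x₁, …, xₙ] the barycentric coordinate polynomials λ₀ = 1 − (x₁ + … + xₙ) and λ_j = x_j for 1 ≤ j ≤ n, the operators D_{ij} = ∂/∂x_j − ∂/∂x_i for 0 ≤ i < j ≤ n (with ∂/∂x₀ = 0), and the Braess–Schwab operator 𝓛u = −Σ_{0 ≤ i < j ≤ n} D_{ij}( λ_i λ_j D_{ij} u ). Then the eigenspace Φ_p = { u ∈ ℝ[x₁, …, xₙ] : 𝓛u = p(p+n)·u } is finite dimensional, all of its elements have total degree ≤ p, and its dimension equals the binomial coefficient C(p+n−1, n−1), i.e., the number of monomials in n variables of total degree exactly p. -/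

import Mathlib

open MvPolynomial

/-- Formal partial derivatives `∂/∂x_i` on `ℝ[x₁,…,xₙ]`, indexed by
`i ∈ {0,…,n}` with the convention `∂/∂x₀ = 0`. -/
noncomputable def pd (n : ℕ) : Fin (n + 1) → (MvPolynomial (Fin n) ℝ →ₗ[ℝ] MvPolynomial (Fin n) ℝ) :=
  Fin.cases 0 (fun j => (pderiv j).toLinearMap)

/-- The edge operator `D_{ij} = ∂/∂x_j − ∂/∂x_i` (with `∂/∂x₀ = 0`). -/
noncomputable def Dop (n : ℕ) (i j : Fin (n + 1)) :
    MvPolynomial (Fin n) ℝ →ₗ[ℝ] MvPolynomial (Fin n) ℝ :=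
  pd n j - pd n i

/-- The barycentric coordinate polynomials of the reference `n`-simplex:
`λ₀ = 1 − (x₁ + … + xₙ)` and `λ_j = x_j` for `1 ≤ j ≤ n`. -/
noncomputable def lam (n : ℕ) : Fin (n + 1) → MvPolynomial (Fin n) ℝ :=
  Fin.cases (1 - ∑ j : Fin n, X j) (fun j => X j)

/-- The Braess–Schwab operator
`𝓛 u = −Σ_{0 ≤ i < j ≤ n} D_{ij}( λ_i λ_j D_{ij} u )`. -/
noncomputable def braessSchwab (n : ℕ) :
    MvPolynomial (Fin n) ℝ →ₗ[ℝ] MvPolynomial (Fin n) ℝ :=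
  - ∑ i : Fin (n + 1), ∑ j : Fin (n + 1),
      if i < j then
        (Dop n i j) ∘ₗ (LinearMap.mulLeft ℝ (lam n i * lam n j)) ∘ₗ (Dop n i j)
      else 0

/-!
Write `E = Σⱼ xⱼ ∂ⱼ` for the Euler operator and `F = Σⱼ ∂ⱼ xⱼ ∂ⱼ`. Expanding the edge operators
`D_{ij}` and using `Σᵢ λᵢ = 1` gives `𝓛 = (E + n) E - F`. Since `E` acts on homogeneous polynomials
of degree `d` as multiplication by `d` while `F` lowers the degree by one, the degree-`d` component
of `𝓛 u` is `d (d + n) u_d - F u_{d+1}`. Comparing top components, a nonzero eigenvector for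
`p (p + n)` has degree exactly `p`, so `u ↦ u_p` is injective on `Φ_p`. It is onto the homogeneous
polynomials of degree `p`: `𝓛 - p (p + n)` preserves the finite-dimensional space of polynomials
of degree `< p` and has trivial kernel there, hence is invertible on it, so every homogeneous `w`
of degree `p` extends to the eigenvector `w + r` with `(𝓛 - p (p + n)) r = F w`. Counting the
monomials of degree `p` gives the dimension.
-/

theorem Finset.sum_sum_ite_lt_add_self {ι M : Type*} [Fintype ι] [LinearOrder ι]
    [AddCommMonoid M] (G : ι → ι → M) (hsymm : ∀ i j, G i j = G j i) (hdiag : ∀ i, G i i = 0) :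
    (∑ i, ∑ j, if i < j then G i j else 0) + (∑ i, ∑ j, if i < j then G i j else 0) =
      ∑ i, ∑ j, G i j := by
  have hsplit (i j : ι) : G i j = (if i < j then G i j else 0) + if j < i then G j i else 0 := by
    rcases lt_trichotomy i j with h | rfl | h
    · simp [h, h.not_gt]
    · simp [hdiag]
    · simp [h, h.not_gt, hsymm i j]
  conv_rhs => rw [Fintype.sum_congr _ _ fun i => Fintype.sum_congr _ _ (hsplit i)]
  simp only [Finset.sum_add_distrib]
  rw [Finset.sum_comm (f := fun i j => if j < i then G j i else 0)]

theorem sum_sum_sub_mul_mul_sub {ι A : Type*} [Fintype ι] [Ring A] (P M : ι → A)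
    (hM : ∀ i j, Commute (M i) (M j)) (hM1 : ∑ i, M i = 1) :
    ∑ i, ∑ j, (P j - P i) * (M i * M j) * (P j - P i) =
      2 * (∑ i, P i * M i * P i - (∑ i, P i * M i) * ∑ i, M i * P i) := by
  have hexpand (i j : ι) : (P j - P i) * (M i * M j) * (P j - P i) =
      P j * M j * (M i * P j) - P j * M j * (M i * P i) - P i * M i * (M j * P j) +
        P i * M i * (M j * P i) := by
    simp only [mul_assoc, ← mul_assoc (M j) (M i), (hM j i).eq]
    noncomm_ring
  have hsumM (a b : A) : ∑ i, a * (M i * b) = a * b := by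
    rw [← Finset.mul_sum, ← Finset.sum_mul, hM1, one_mul]
  simp only [hexpand, Finset.sum_add_distrib, Finset.sum_sub_distrib, hsumM]
  rw [Finset.sum_comm (f := fun i j => P j * M j * (M i * P j))]
  simp only [hsumM, ← Finset.sum_mul, ← Finset.mul_sum]
  noncomm_ring

theorem sum_sum_lt_sub_mul_mul_sub_add_self {ι A : Type*} [Fintype ι] [LinearOrder ι] [Ring A]
    (P M : ι → A) (hM : ∀ i j, Commute (M i) (M j)) (hM1 : ∑ i, M i = 1) :
    (∑ i, ∑ j, if i < j then (P j - P i) * (M i * M j) * (P j - P i) else 0) +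
        (∑ i, ∑ j, if i < j then (P j - P i) * (M i * M j) * (P j - P i) else 0) =
      2 * (∑ i, P i * M i * P i - (∑ i, P i * M i) * ∑ i, M i * P i) := by
  rw [Finset.sum_sum_ite_lt_add_self, sum_sum_sub_mul_mul_sub P M hM hM1]
  · intro i j
    rw [(hM i j).eq]
    noncomm_ring
  · simp

namespace MvPolynomial

variable {σ R : Type*} [CommSemiring R]

theorem homogeneousComponent_totalDegree_ne_zero {φ : MvPolynomial σ R} (h : φ ≠ 0) :
    homogeneousComponent φ.totalDegree φ ≠ 0 := by
  obtain ⟨s, hs, hs_deg⟩ := Finset.exists_mem_eq_sup φ.support (support_nonempty.mpr h)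
    fun s => s.sum fun _ e => e
  refine ne_of_apply_ne (coeff s) ?_
  rw [coeff_homogeneousComponent, if_pos, coeff_zero]
  · exact mem_support_iff.mp hs
  · exact hs_deg.symm

theorem totalDegree_le_iff_homogeneousComponent_eq_zero {φ : MvPolynomial σ R} {m : ℕ} :
    φ.totalDegree ≤ m ↔ ∀ d, m < d → homogeneousComponent d φ = 0 := by
  refine ⟨fun h d hd => homogeneousComponent_eq_zero d φ (by omega), fun h => ?_⟩
  by_contra! hlt
  exact homogeneousComponent_totalDegree_ne_zero (by rintro rfl; simp at hlt) (h _ hlt)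

theorem homogeneousComponent_comp_eq_comp_homogeneousComponent_add (k : ℕ)
    {T : Module.End R (MvPolynomial σ R)}
    (hT : ∀ d φ, IsHomogeneous φ (d + k) → IsHomogeneous (T φ) d)
    (hT0 : ∀ i < k, ∀ φ, IsHomogeneous φ i → T φ = 0) (d : ℕ) :
    homogeneousComponent d ∘ₗ T = T ∘ₗ homogeneousComponent (d + k) := by
  refine linearMap_ext fun s => LinearMap.ext fun c => ?_
  have hs : (monomial s c).IsHomogeneous s.degree := isHomogeneous_monomial c rfl
  simp only [LinearMap.comp_apply, homogeneousComponent_of_mem hs]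
  split_ifs with hdk
  · rw [← hdk] at hs
    exact homogeneousComponent_eq_self (hT d _ hs)
  · rw [map_zero]
    rcases lt_or_ge s.degree k with hlt | hge
    · rw [hT0 _ hlt _ hs, map_zero]
    · obtain ⟨e, he⟩ := Nat.exists_eq_add_of_le' hge
      rw [he] at hs
      rw [homogeneousComponent_of_mem (hT e _ hs), if_neg (by omega)]

theorem pderiv_mul_mulLeft_X (i : σ) :
    (pderiv i).toLinearMap * LinearMap.mulLeft R (X i) =
      LinearMap.mulLeft R (X i) * (pderiv i).toLinearMap + 1 := by
  refine LinearMap.ext fun u => ?_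
  simp only [Module.End.mul_apply, LinearMap.mulLeft_apply, LinearMap.add_apply,
    Module.End.one_apply, Derivation.coeFn_coe]
  rw [pderiv_mul, pderiv_X_self, one_mul, add_comm]

variable [Fintype σ]

variable (σ R) in
noncomputable def eulerOperator : Module.End R (MvPolynomial σ R) :=
  ∑ i, LinearMap.mulLeft R (X i) * (pderiv i).toLinearMap

variable (σ R) in
noncomputable def pderivXPderiv : Module.End R (MvPolynomial σ R) :=
  ∑ i, (pderiv i).toLinearMap * LinearMap.mulLeft R (X i) * (pderiv i).toLinearMap

theorem sum_pderiv_mul_mulLeft_X :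
    ∑ i, (pderiv i).toLinearMap * LinearMap.mulLeft R (X i) =
      eulerOperator σ R + (Fintype.card σ : Module.End R (MvPolynomial σ R)) := by
  simp [pderiv_mul_mulLeft_X, Finset.sum_add_distrib, eulerOperator]

theorem IsHomogeneous.eulerOperator_apply {φ : MvPolynomial σ R} {d : ℕ}
    (h : φ.IsHomogeneous d) : eulerOperator σ R φ = d • φ := by
  simpa [eulerOperator, LinearMap.sum_apply] using h.sum_X_mul_pderiv

protected theorem IsHomogeneous.pderivXPderiv {φ : MvPolynomial σ R} {d : ℕ}
    (h : φ.IsHomogeneous (d + 1)) : (pderivXPderiv σ R φ).IsHomogeneous d := by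
  simp only [pderivXPderiv, LinearMap.sum_apply, Module.End.mul_apply, LinearMap.mulLeft_apply,
    Derivation.coeFn_coe]
  refine IsHomogeneous.sum _ _ _ fun i _ => ?_
  simpa using ((isHomogeneous_X R i).mul h.pderiv).pderiv (i := i)

theorem pderivXPderiv_apply_eq_zero_of_isHomogeneous_zero {φ : MvPolynomial σ R}
    (h : φ.IsHomogeneous 0) : pderivXPderiv σ R φ = 0 := by
  rw [← totalDegree_zero_iff_isHomogeneous, totalDegree_eq_zero_iff_eq_C] at h
  rw [h]
  simp [pderivXPderiv, LinearMap.sum_apply]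

theorem homogeneousComponent_eulerOperator_apply (d : ℕ) (φ : MvPolynomial σ R) :
    homogeneousComponent d (eulerOperator σ R φ) = d • homogeneousComponent d φ := by
  have hE : ∀ (d : ℕ) (φ : MvPolynomial σ R), φ.IsHomogeneous (d + 0) →
      (eulerOperator σ R φ).IsHomogeneous d := fun d φ h => by
    rw [h.eulerOperator_apply]
    exact nsmul_mem (S := homogeneousSubmodule σ R d) h d
  rw [← LinearMap.comp_apply,
    homogeneousComponent_comp_eq_comp_homogeneousComponent_add 0 hE (by simp),
    LinearMap.comp_apply, add_zero, (homogeneousComponent_isHomogeneous d φ).eulerOperator_apply]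

theorem homogeneousComponent_pderivXPderiv_apply (d : ℕ) (φ : MvPolynomial σ R) :
    homogeneousComponent d (pderivXPderiv σ R φ) =
      pderivXPderiv σ R (homogeneousComponent (d + 1) φ) := by
  rw [← LinearMap.comp_apply, homogeneousComponent_comp_eq_comp_homogeneousComponent_add 1
    (fun _ _ h => h.pderivXPderiv) ?_, LinearMap.comp_apply]
  intro i hi φ h
  obtain rfl : i = 0 := by omega
  exact pderivXPderiv_apply_eq_zero_of_isHomogeneous_zero h

end MvPolynomial

theorem MvPolynomial.finrank_homogeneousSubmodule {σ R : Type*} [Fintype σ] [CommRing R]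
    [Nontrivial R] (p : ℕ) :
    Module.finrank R (homogeneousSubmodule σ R p) = (Fintype.card σ + p - 1).choose p := by
  classical
  rw [homogeneousSubmodule_eq_finsupp_supported, ← restrictSupport,
    Module.finrank_eq_nat_card_basis (basisRestrictSupport R _), ← Sym.card_sym_eq_choose,
    ← Nat.card_eq_fintype_card]
  exact Nat.card_congr (Sym.equivNatSum σ p).symm

theorem pd_zero (n : ℕ) : pd n 0 = 0 := rfl

theorem pd_succ (n : ℕ) (j : Fin n) : pd n j.succ = (pderiv j).toLinearMap := rfl

theorem lam_succ (n : ℕ) (j : Fin n) : lam n j.succ = X j := rfl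

theorem sum_lam (n : ℕ) : ∑ i, lam n i = 1 := by
  simp [Fin.sum_univ_succ, lam]

theorem braessSchwab_eq (n : ℕ) :
    braessSchwab n = (eulerOperator (Fin n) ℝ + n) * eulerOperator (Fin n) ℝ -
      pderivXPderiv (Fin n) ℝ := by
  set M : Fin (n + 1) → Module.End ℝ (MvPolynomial (Fin n) ℝ) :=
    fun i => LinearMap.mulLeft ℝ (lam n i)
  have hM : ∀ i j, Commute (M i) (M j) := fun i j => by
    simp only [M, Commute, SemiconjBy, Module.End.mul_eq_comp, ← LinearMap.mulLeft_mul, mul_comm]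
  have hM1 : ∑ i, M i = 1 := LinearMap.ext fun u => by
    simp [M, LinearMap.sum_apply, ← Finset.sum_mul, sum_lam]
  set S := ∑ i : Fin (n + 1), ∑ j : Fin (n + 1),
      if i < j then (pd n j - pd n i) * (M i * M j) * (pd n j - pd n i) else 0
  have hbs : braessSchwab n = -S := by
    simp only [braessSchwab, LinearMap.mulLeft_mul]
    rfl
  have hS : S = ∑ i, pd n i * M i * pd n i - (∑ i, pd n i * M i) * ∑ i, M i * pd n i := by
    refine smul_right_injective _ (two_ne_zero : (2 : ℝ) ≠ 0) ?_
    simp only [two_smul]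
    rw [sum_sum_lt_sub_mul_mul_sub_add_self _ _ hM hM1, two_mul]
  have hF : ∑ i, pd n i * M i * pd n i = pderivXPderiv (Fin n) ℝ := by
    simp only [Fin.sum_univ_succ, pd_zero, zero_mul, zero_add, M, pd_succ, lam_succ]
    rfl
  have hE : ∑ i, M i * pd n i = eulerOperator (Fin n) ℝ := by
    simp only [Fin.sum_univ_succ, pd_zero, mul_zero, zero_add, M, pd_succ, lam_succ]
    rfl
  have hEn : ∑ i, pd n i * M i = eulerOperator (Fin n) ℝ + n := by
    simp only [Fin.sum_univ_succ, pd_zero, zero_mul, zero_add, M, pd_succ, lam_succ]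
    rw [sum_pderiv_mul_mulLeft_X, Fintype.card_fin]
  rw [hbs, hS, hF, hE, hEn, neg_sub]

theorem braessSchwab_apply_of_isHomogeneous {n d : ℕ} {u : MvPolynomial (Fin n) ℝ}
    (h : u.IsHomogeneous d) :
    braessSchwab n u = ((d * (d + n) : ℕ) : ℝ) • u - pderivXPderiv (Fin n) ℝ u := by
  rw [braessSchwab_eq]
  simp only [LinearMap.sub_apply, Module.End.mul_apply, LinearMap.add_apply,
    Module.End.natCast_apply, h.eulerOperator_apply, map_nsmul]
  rw [Nat.cast_smul_eq_nsmul]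
  module

theorem homogeneousComponent_braessSchwab (n d : ℕ) (u : MvPolynomial (Fin n) ℝ) :
    homogeneousComponent d (braessSchwab n u) =
      ((d * (d + n) : ℕ) : ℝ) • homogeneousComponent d u -
        pderivXPderiv (Fin n) ℝ (homogeneousComponent (d + 1) u) := by
  rw [braessSchwab_eq]
  simp only [LinearMap.sub_apply, Module.End.mul_apply, LinearMap.add_apply,
    Module.End.natCast_apply, map_sub, map_add, map_nsmul, homogeneousComponent_eulerOperator_apply,
    homogeneousComponent_pderivXPderiv_apply]
  rw [Nat.cast_smul_eq_nsmul]
  module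

theorem totalDegree_eq_of_mem_eigenspace {n p : ℕ} {u : MvPolynomial (Fin n) ℝ}
    (hu : u ∈ Module.End.eigenspace (braessSchwab n) ((p * (p + n) : ℕ) : ℝ)) (h0 : u ≠ 0) :
    u.totalDegree = p := by
  set d := u.totalDegree
  have hcomp := homogeneousComponent_braessSchwab n d u
  rw [Module.End.mem_eigenspace_iff.mp hu, map_smul,
    homogeneousComponent_eq_zero (d + 1) u (by omega), map_zero, sub_zero] at hcomp
  have hmono : StrictMono fun k : ℕ => k * (k + n) := fun a b hab =>
    Nat.mul_lt_mul'' hab (by omega)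
  exact (hmono.injective <| Nat.cast_injective <|
    smul_left_injective ℝ (homogeneousComponent_totalDegree_ne_zero h0) hcomp).symm

theorem braessSchwab_mem_restrictTotalDegree {n m : ℕ} {u : MvPolynomial (Fin n) ℝ}
    (hu : u ∈ restrictTotalDegree (Fin n) ℝ m) :
    braessSchwab n u ∈ restrictTotalDegree (Fin n) ℝ m := by
  simp only [mem_restrictTotalDegree, totalDegree_le_iff_homogeneousComponent_eq_zero] at hu ⊢
  intro d hd
  rw [homogeneousComponent_braessSchwab, hu d hd, hu (d + 1) (by omega), smul_zero, map_zero,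
    sub_zero]

theorem exists_braessSchwab_sub_smul_eq {n p m : ℕ} (hm : m < p) {v : MvPolynomial (Fin n) ℝ}
    (hv : v.totalDegree ≤ m) :
    ∃ r : MvPolynomial (Fin n) ℝ,
      r.totalDegree ≤ m ∧ braessSchwab n r - ((p * (p + n) : ℕ) : ℝ) • r = v := by
  set V := restrictTotalDegree (Fin n) ℝ m
  set T := braessSchwab n - ((p * (p + n) : ℕ) : ℝ) • (1 : Module.End ℝ _)
  have hT : ∀ u ∈ V, T u ∈ V := fun u hu =>
    V.sub_mem (braessSchwab_mem_restrictTotalDegree hu) (V.smul_mem _ hu)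
  have hinj : Function.Injective (T.restrict hT) := by
    refine (injective_iff_map_eq_zero _).mpr fun r hr => ?_
    have hr_eig : r.1 ∈ Module.End.eigenspace (braessSchwab n) ((p * (p + n) : ℕ) : ℝ) :=
      Module.End.mem_eigenspace_iff.mpr (sub_eq_zero.mp (congrArg Subtype.val hr))
    by_contra hne
    have := totalDegree_eq_of_mem_eigenspace hr_eig (by simpa using hne)
    have := (mem_restrictTotalDegree _ _ _).mp r.2
    omega
  obtain ⟨r, hr⟩ := LinearMap.injective_iff_surjective.mp hinj
    ⟨v, (mem_restrictTotalDegree _ _ _).mpr hv⟩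
  exact ⟨r, (mem_restrictTotalDegree _ _ _).mp r.2, congrArg Subtype.val hr⟩

noncomputable def eigenspaceTopComponent (n p : ℕ) :
    Module.End.eigenspace (braessSchwab n) ((p * (p + n) : ℕ) : ℝ) →ₗ[ℝ]
      homogeneousSubmodule (Fin n) ℝ p :=
  LinearMap.codRestrict _ (homogeneousComponent p ∘ₗ Submodule.subtype _) fun u =>
    homogeneousComponent_isHomogeneous p u.1

theorem eigenspaceTopComponent_injective (n p : ℕ) :
    Function.Injective (eigenspaceTopComponent n p) := by
  refine (injective_iff_map_eq_zero _).mpr fun u hu => ?_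
  by_contra hne
  have hu0 : (u : MvPolynomial (Fin n) ℝ) ≠ 0 := by simpa using hne
  have htop := homogeneousComponent_totalDegree_ne_zero hu0
  rw [totalDegree_eq_of_mem_eigenspace u.2 hu0] at htop
  exact htop (congrArg Subtype.val hu)

theorem eigenspaceTopComponent_surjective (n p : ℕ) :
    Function.Surjective (eigenspaceTopComponent n p) := by
  rintro ⟨w, hw⟩
  obtain ⟨r, hr_top, hr⟩ : ∃ r : MvPolynomial (Fin n) ℝ, homogeneousComponent p r = 0 ∧
      braessSchwab n r - ((p * (p + n) : ℕ) : ℝ) • r = pderivXPderiv (Fin n) ℝ w := by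
    cases p with
    | zero => exact ⟨0, by simp, by simp [pderivXPderiv_apply_eq_zero_of_isHomogeneous_zero hw]⟩
    | succ m =>
      obtain ⟨r, hr_deg, hr⟩ := exists_braessSchwab_sub_smul_eq (Nat.lt_succ_self m)
        hw.pderivXPderiv.totalDegree_le
      exact ⟨r, homogeneousComponent_eq_zero _ _ (by omega), hr⟩
  refine ⟨⟨w + r, Module.End.mem_eigenspace_iff.mpr ?_⟩, Subtype.ext ?_⟩
  · rw [map_add, braessSchwab_apply_of_isHomogeneous hw, sub_eq_iff_eq_add'.mp hr, smul_add]
    abel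
  · change homogeneousComponent p (w + r) = w
    rw [map_add, hr_top, add_zero, homogeneousComponent_eq_self hw]

/-- The eigenspace `Φ_p = {u : 𝓛u = p(p+n)u}` of the Braess–Schwab operator on
`ℝ[x₁,…,xₙ]` is finite dimensional, consists of polynomials of total degree at
most `p`, and has dimension `C(p+n−1, n−1)`, the number of monomials in `n`
variables of total degree exactly `p`. -/
theorem braessSchwab_eigenspace_finrank
    (n : ℕ) (hn : 1 ≤ n) (p : ℕ) :
    FiniteDimensional ℝ
      (Module.End.eigenspace (braessSchwab n) ((p * (p + n) : ℕ) : ℝ)) ∧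
    (∀ u ∈ Module.End.eigenspace (braessSchwab n) ((p * (p + n) : ℕ) : ℝ),
      u.totalDegree ≤ p) ∧
    Module.finrank ℝ
        (Module.End.eigenspace (braessSchwab n) ((p * (p + n) : ℕ) : ℝ))
      = Nat.choose (p + n - 1) (n - 1) := by
  let e := LinearEquiv.ofBijective (eigenspaceTopComponent n p)
    ⟨eigenspaceTopComponent_injective n p, eigenspaceTopComponent_surjective n p⟩
  have : Module.Finite ℝ (homogeneousSubmodule (Fin n) ℝ p) :=
    Module.Finite.iff_fg.mpr (homogeneousSubmodule_fg _ _ p)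
  refine ⟨Module.Finite.equiv e.symm, fun u hu => ?_, ?_⟩
  · rcases eq_or_ne u 0 with rfl | hu0
    · simp
    · exact (totalDegree_eq_of_mem_eigenspace hu hu0).le
  · rw [e.finrank_eq, finrank_homogeneousSubmodule, Fintype.card_fin,
      show p + n - 1 = (n - 1) + p by omega, show n + p - 1 = (n - 1) + p by omega,
      Nat.choose_symm_add]
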